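/- (Per-object consistency, formal content of the Consistency theorem: no double spend.) In the Byzcuit object transition system, along any finite execution starting from Active s0 (a finite list of labeled steps each related by Step), at most one step carries a commit label. Equivalently, there do not exist two (possibly distinct) transactions T1 and T2 such that the same object is committed by both in a single execution; in particular, no two conflicting transactions sharing the object as input are both committed. -/

import Mathlib

/-- States of the life cycle of a single Byzcuit object. -/
inductive ObjState : Type where
  | Active : ℕ → ObjState
  | Locked : ℕ → ℕ → ObjState
  | Inactive : ℕ → ObjState
deriving DecidableEq

/-- Labels of the transitions: lock, commit and abort, each carrying a
transaction `T` and a transaction sequence number `sT`. -/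
inductive Label : Type where
  | lock : ℕ → ℕ → Label
  | commit : ℕ → ℕ → Label
  | abort : ℕ → ℕ → Label
deriving DecidableEq

/-- The step relation of the Byzcuit object transition system, generated by
exactly three rules. -/
inductive Step : ObjState → Label → ObjState → Prop where
  | lock {s T sT : ℕ} (h : sT ≥ s) :
      Step (.Active s) (.lock T sT) (.Locked T sT)
  | commit {T sT : ℕ} :
      Step (.Locked T sT) (.commit T sT) (.Inactive T)
  | abort {T sT : ℕ} :
      Step (.Locked T sT) (.abort T sT) (.Active (sT + 1))

/-- Reachability by zero or more steps (labels existentially quantified). -/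
inductive Reach : ObjState → ObjState → Prop where
  | refl (σ : ObjState) : Reach σ σ
  | tail {σ σ' σ'' : ObjState} (h : Reach σ σ') (ℓ : Label)
      (hs : Step σ' ℓ σ'') : Reach σ σ''

/-- A finite execution from `σ`: a list of labeled steps, each related by
`Step`, recording the label and the state after the step. -/
inductive Trace : ObjState → List (Label × ObjState) → Prop where
  | nil (σ : ObjState) : Trace σ []
  | cons {σ σ' : ObjState} {ℓ : Label} {rest : List (Label × ObjState)}
      (h : Step σ ℓ σ') (ht : Trace σ' rest) : Trace σ ((ℓ, σ') :: rest)

/-- Whether a label is a commit label. -/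
def isCommit : Label → Bool
  | .commit _ _ => true
  | _ => false

/-! A commit step enters an `Inactive` state, and `Inactive` states have no outgoing steps,
so a commit can only be the last step of an execution. -/

theorem Step.eq_inactive_of_isCommit {σ σ' : ObjState} {ℓ : Label} (h : Step σ ℓ σ')
    (hℓ : isCommit ℓ = true) : ∃ T, σ' = .Inactive T := by
  cases h with
  | commit => exact ⟨_, rfl⟩
  | lock _ | abort => simp [isCommit] at hℓ

theorem Trace.eq_nil_of_inactive {T : ℕ} {tr : List (Label × ObjState)}
    (h : Trace (.Inactive T) tr) : tr = [] := by
  cases h with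
  | nil => rfl
  | cons hs _ => cases hs

theorem Trace.countP_isCommit_le_one {σ : ObjState} {tr : List (Label × ObjState)}
    (h : Trace σ tr) : tr.countP (fun p => isCommit p.1) ≤ 1 := by
  induction h with
  | nil => simp
  | @cons _ _ ℓ _ hs hrest ih =>
    by_cases hℓ : isCommit ℓ = true
    · obtain ⟨T, rfl⟩ := hs.eq_inactive_of_isCommit hℓ
      simp [hrest.eq_nil_of_inactive, hℓ]
    · simpa [List.countP_cons, hℓ] using ih

/-- **Per-object consistency: no double spend.** Along any finite execution
starting from `Active s0`, at most one step carries a commit label; hence the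
object cannot be committed by two (possibly distinct) transactions. -/
theorem at_most_one_commit (s0 : ℕ) (tr : List (Label × ObjState))
    (h : Trace (.Active s0) tr) :
    (tr.countP (fun p => isCommit p.1)) ≤ 1 :=
  h.countP_isCommit_le_one
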